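/- arXiv:2308.00674 — 7 statements merged into one kernel-verified Lean document; each statement's English description precedes it below -/
import Mathlib

section
/- Every C4-saturated graph on n ≥ 5 vertices has at least ⌊(3n−5)/2⌋ edges. -/
open SimpleGraph

/-- A graph contains a 4-cycle. -/
def HasC4 {V : Type*} (G : SimpleGraph V) : Prop :=
  ∃ a b c d : V, a ≠ b ∧ a ≠ c ∧ a ≠ d ∧ b ≠ c ∧ b ≠ d ∧ c ≠ d ∧
    G.Adj a b ∧ G.Adj b c ∧ G.Adj c d ∧ G.Adj d a

/-- A critical coloring of `G` (for the pair `(C₄, K_{1,k})`) given by its red subgraph `R`: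
the blue subgraph is `G \ R`; there is no red `C₄` and no blue `K_{1,k}`. -/
def CriticalColoring {V : Type*} (k : ℕ) (G R : SimpleGraph V) : Prop :=
  R ≤ G ∧ ¬ HasC4 R ∧ ∀ v : V, ((G \ R).neighborSet v).ncard < k

/-- `G` is `(C₄, K_{1,k})`-co-critical. -/
def CoCritical {V : Type*} (k : ℕ) (G : SimpleGraph V) : Prop :=
  G ≠ ⊤ ∧ (∃ R : SimpleGraph V, CriticalColoring k G R) ∧
    ∀ u v : V, u ≠ v → ¬ G.Adj u v →
      ¬ ∃ R : SimpleGraph V, CriticalColoring k (G ⊔ fromEdgeSet {s(u, v)}) R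

/-!
Saturation only enters through the fact that any two non-adjacent vertices are joined by a walk of
length three; with C4-freeness this gives `3n ≤ ∑ deg + 6`, i.e. `2e ≥ 3n - 6`.
Root the graph at a vertex of minimum degree. At a leaf with neighbour `w`, split `V` into `{w}`,
`A = N(w)` and the rest `B`; at a vertex `v` of degree two, into `S = N(v)`, `A = N(S) \ S`
and the rest `B`. Walks of length three starting at the root give every vertex of `B` a
neighbour in `A` and most vertices of `A` a neighbour in `A`, which is what the degree count along
the split needs. The exceptions are few: at most two leaves in `B`, and, when all
vertices of degree two lie on triangles, at most one vertex of `A` besides `v` that sees neither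
`A` nor a vertex of degree at least three (such vertices carry pendant triangles, and any two
pendant triangles have adjacent attachment vertices). Minimum degree three is trivial.
-/

open Finset

lemma Finset.mul_card_le_sum_add_card_filter {ι : Type*} (s : Finset ι) (f : ι → ℕ) (p : ι → Prop)
    [DecidablePred p] {k : ℕ} (h : ∀ i ∈ s, k ≤ f i + if p i then 1 else 0) :
    k * #s ≤ ∑ i ∈ s, f i + #{i ∈ s | p i} := by
  calc k * #s = ∑ _i ∈ s, k := by rw [sum_const, smul_eq_mul, mul_comm]
    _ ≤ ∑ i ∈ s, (f i + if p i then 1 else 0) := sum_le_sum h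
    _ = _ := by rw [sum_add_distrib, sum_boole, Nat.cast_id]

lemma Finset.card_add_card_add_card_compl_union {α : Type*} [Fintype α] [DecidableEq α]
    {s t : Finset α} (h : Disjoint s t) : #s + #t + #(s ∪ t)ᶜ = Fintype.card α := by
  rw [← card_union_of_disjoint h, card_add_card_compl]

namespace SimpleGraph

variable {V : Type*} {G : SimpleGraph V}

lemma hasC4_of_adj {a b c d : V} (hab : G.Adj a b) (hbc : G.Adj b c) (hcd : G.Adj c d)
    (hda : G.Adj d a) (hac : a ≠ c) (hbd : b ≠ d) : HasC4 G :=
  ⟨a, b, c, d, hab.ne, hac, hda.ne', hbc.ne, hbd, hcd.ne, hab, hbc, hcd, hda⟩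

lemma eq_of_adj_of_adj_of_not_hasC4 (hG : ¬ HasC4 G) {a b x y : V} (hab : a ≠ b)
    (hax : G.Adj a x) (hbx : G.Adj b x) (hay : G.Adj a y) (hby : G.Adj b y) : x = y := by
  by_contra hxy
  exact hG (hasC4_of_adj hax hbx.symm hby hay.symm hab hxy)

def ThreeWalkConnected (G : SimpleGraph V) : Prop :=
  ∀ ⦃u v : V⦄, u ≠ v → ¬ G.Adj u v → ∃ x y, G.Adj u x ∧ G.Adj x y ∧ G.Adj y v

lemma exists_adj_adj_adj_of_hasC4_sup (hG : ¬ HasC4 G) {u v : V}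
    (h : HasC4 (G ⊔ fromEdgeSet {s(u, v)})) : ∃ x y, G.Adj u x ∧ G.Adj x y ∧ G.Adj y v := by
  have close : ∀ p q r s, G.Adj p q → G.Adj q r → G.Adj r s → s(s, p) = s(u, v) →
      ∃ x y, G.Adj u x ∧ G.Adj x y ∧ G.Adj y v := by
    intro p q r s h₁ h₂ h₃ h
    rcases Sym2.eq_iff.mp h with ⟨rfl, rfl⟩ | ⟨rfl, rfl⟩
    · exact ⟨r, q, h₃.symm, h₂.symm, h₁.symm⟩
    · exact ⟨q, r, h₁, h₂, h₃⟩
  obtain ⟨a, b, c, d, hab, hac, had, hbc, hbd, hcd, h₁, h₂, h₃, h₄⟩ := h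
  simp only [sup_adj, fromEdgeSet_adj, Set.mem_singleton_iff] at h₁ h₂ h₃ h₄
  -- the 4-cycle uses the new edge exactly once: two uses would identify two of its vertices
  rcases h₁ with h₁ | ⟨e₁, -⟩ <;> rcases h₂ with h₂ | ⟨e₂, -⟩ <;>
    rcases h₃ with h₃ | ⟨e₃, -⟩ <;> rcases h₄ with h₄ | ⟨e₄, -⟩
  all_goals first
    | exact absurd (hasC4_of_adj h₁ h₂ h₃ h₄ hac hbd) hG
    | exact close _ _ _ _ h₁ h₂ h₃ e₄ | exact close _ _ _ _ h₂ h₃ h₄ e₁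
    | exact close _ _ _ _ h₃ h₄ h₁ e₂ | exact close _ _ _ _ h₄ h₁ h₂ e₃
    | (exfalso; clear close; simp only [Sym2.eq_iff] at *; grind)

lemma threeWalkConnected_of_saturated (hG : ¬ HasC4 G)
    (hsat : ∀ u v : V, u ≠ v → ¬ G.Adj u v → HasC4 (G ⊔ fromEdgeSet {s(u, v)})) :
    G.ThreeWalkConnected :=
  fun u v huv hn => exists_adj_adj_adj_of_hasC4_sup hG (hsat u v huv hn)

/-- A walk of length three from `u` to `u'` can only leave the first triangle through `x` and
enter the second through `x'`. -/
lemma ThreeWalkConnected.adj_of_pendant_triangles (hG : G.ThreeWalkConnected)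
    {x u w x' u' w' : V}
    (hu : ∀ z, G.Adj u z ↔ z = x ∨ z = w) (hw : ∀ z, G.Adj w z ↔ z = x ∨ z = u)
    (hu' : ∀ z, G.Adj u' z ↔ z = x' ∨ z = w') (hw' : ∀ z, G.Adj w' z ↔ z = x' ∨ z = u')
    (hx : x ≠ x') : G.Adj x x' := by
  by_contra hn
  have hxu := (hu x).2 (.inl rfl)
  have hxw := (hw x).2 (.inl rfl)
  have hxu' := (hu' x').2 (.inl rfl)
  have hxw' := (hw' x').2 (.inl rfl)
  have hx' : x' ≠ u ∧ x' ≠ w := by grind [G.adj_symm]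
  have hx : x ≠ u' ∧ x ≠ w' := by grind [G.adj_symm]
  have hdisj : u' ≠ u ∧ u' ≠ w ∧ w' ≠ u ∧ w' ≠ w := by grind [G.adj_symm]
  obtain ⟨y, z, hy, hyz, hz⟩ := hG (Ne.symm hdisj.1) (by grind)
  grind [G.adj_symm]

section Finite

variable [Fintype V] [DecidableRel G.Adj]

lemma ThreeWalkConnected.card_le_one_of_degree_eq_zero (hG : G.ThreeWalkConnected) {z : V}
    (hz : G.degree z = 0) : Fintype.card V ≤ 1 := by
  refine Fintype.card_le_one_iff.mpr fun x y => ?_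
  have hzero : ∀ u, ¬ G.Adj z u := fun u hzu =>
    (card_pos.mpr ⟨u, (G.mem_neighborFinset z u).mpr hzu⟩).ne' hz
  have hall : ∀ u, u = z := fun u => by
    by_contra hu
    obtain ⟨p, -, hzp, -⟩ := hG (Ne.symm hu) (hzero u)
    exact hzero p hzp
  rw [hall x, hall y]

lemma adj_iff_of_neighborFinset_eq {v : V} {s : Finset V} (hv : G.neighborFinset v = s) (z : V) :
    G.Adj v z ↔ z ∈ s := by
  rw [← mem_neighborFinset, hv]

lemma ThreeWalkConnected.adj_of_leaves (hG : G.ThreeWalkConnected) {y y' h h' : V}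
    (hy : G.neighborFinset y = {h}) (hy' : G.neighborFinset y' = {h'}) (hne : y ≠ y')
    (hn : ¬ G.Adj y y') : G.Adj h h' := by
  obtain ⟨p, q, hp, hpq, hq⟩ := hG hne hn
  rw [adj_iff_of_neighborFinset_eq hy, mem_singleton] at hp
  rw [G.adj_comm, adj_iff_of_neighborFinset_eq hy', mem_singleton] at hq
  exact hp ▸ hq ▸ hpq

lemma ThreeWalkConnected.exists_adj_adj_of_leaf (hG : G.ThreeWalkConnected) {ℓ w x : V}
    (hℓ : G.neighborFinset ℓ = {w}) (hxℓ : x ≠ ℓ) (hxw : x ≠ w) : ∃ q, G.Adj w q ∧ G.Adj q x := by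
  obtain ⟨p, q, hp, hpq, hqx⟩ :=
    hG (Ne.symm hxℓ) (by rw [adj_iff_of_neighborFinset_eq hℓ, mem_singleton]; exact hxw)
  rw [adj_iff_of_neighborFinset_eq hℓ, mem_singleton] at hp
  exact ⟨q, hp ▸ hpq, hqx⟩

variable [DecidableEq V]

lemma neighborFinset_eq_pair_of_degree_eq_two {v a b : V} (hv : G.degree v = 2)
    (ha : G.Adj v a) (hb : G.Adj v b) (hab : a ≠ b) : G.neighborFinset v = {a, b} := by
  refine (eq_of_subset_of_card_le (fun z hz => ?_) (by rw [card_pair hab]; exact hv.le)).symm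
  rcases mem_insert.mp hz with rfl | hz
  · exact (mem_neighborFinset _ _ _).mpr ha
  · exact (mem_neighborFinset _ _ _).mpr (mem_singleton.mp hz ▸ hb)

lemma exists_adj_iff_of_degree_eq_two {v a : V} (hv : G.degree v = 2) (ha : G.Adj v a) :
    ∃ b, b ≠ a ∧ ∀ z, G.Adj v z ↔ z = a ∨ z = b := by
  obtain ⟨b, hb, hba⟩ := exists_mem_ne (by rw [G.card_neighborFinset_eq_degree, hv]; omega) a
  refine ⟨b, hba, fun z => ?_⟩
  rw [adj_iff_of_neighborFinset_eq (neighborFinset_eq_pair_of_degree_eq_two hv ha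
    ((mem_neighborFinset _ _ _).mp hb) hba.symm), mem_insert, mem_singleton]

lemma exists_pendant_triangle (hδ : ∀ y, 2 ≤ G.degree y)
    (htri : ∀ z x y, G.degree z = 2 → G.Adj z x → G.Adj z y → x ≠ y → G.Adj x y)
    {S : Finset V} {x u : V} (hxu : G.Adj x u) (hu : u ∉ S)
    (hout : ∀ y, G.Adj x y → y ∉ S → G.degree y ≤ 2 ∧ ∀ s ∈ S, ¬ G.Adj y s) :
    ∃ w, (∀ z, G.Adj u z ↔ z = x ∨ z = w) ∧ (∀ z, G.Adj w z ↔ z = x ∨ z = u) := by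
  obtain ⟨hu2, huS⟩ := hout u hxu hu
  obtain ⟨w, hwx, huw⟩ := exists_adj_iff_of_degree_eq_two (le_antisymm hu2 (hδ u)) hxu.symm
  have hwu : G.Adj w u := ((huw w).2 (.inr rfl)).symm
  have hxw : G.Adj x w := htri u x w (le_antisymm hu2 (hδ u)) hxu.symm hwu.symm hwx.symm
  have hw2 := (hout w hxw fun hw => huS w hw hwu.symm).1
  refine ⟨w, huw, fun z => ?_⟩
  rw [adj_iff_of_neighborFinset_eq (neighborFinset_eq_pair_of_degree_eq_two
    (le_antisymm hw2 (hδ w)) hxw.symm hwu hxu.ne), mem_insert, mem_singleton]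

lemma one_le_card_neighborFinset_inter {x y : V} {T : Finset V} (hxy : G.Adj x y) (hy : y ∈ T) :
    1 ≤ #(G.neighborFinset x ∩ T) :=
  card_pos.mpr ⟨y, mem_inter.mpr ⟨(mem_neighborFinset _ _ _).mpr hxy, hy⟩⟩

lemma sum_card_neighborFinset_inter_comm (A T : Finset V) :
    ∑ x ∈ A, #(G.neighborFinset x ∩ T) = ∑ y ∈ T, #(G.neighborFinset y ∩ A) := by
  have h : ∀ (x : V) (T : Finset V), G.neighborFinset x ∩ T = T.bipartiteAbove G.Adj x := by
    intro x T; ext y; simp [and_comm]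
  simp only [h]
  rw [sum_card_bipartiteAbove_eq_sum_card_bipartiteBelow]
  refine sum_congr rfl fun y _ => congrArg card ?_
  ext x; simp [G.adj_comm]

lemma degree_eq_card_inter_add {S A : Finset V} (hSA : Disjoint S A) (x : V) :
    G.degree x = #(G.neighborFinset x ∩ S) + #(G.neighborFinset x ∩ A) +
      #(G.neighborFinset x ∩ (S ∪ A)ᶜ) := by
  rw [← card_union_of_disjoint (hSA.mono inter_subset_right inter_subset_right),
    ← inter_union_distrib_left, ← sdiff_eq_inter_compl, card_inter_add_card_sdiff,
    card_neighborFinset_eq_degree]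

lemma sum_degree_eq_of_disjoint {S A : Finset V} (hSA : Disjoint S A) :
    ∑ v, G.degree v = ∑ s ∈ S, G.degree s +
      ∑ x ∈ A, (#(G.neighborFinset x ∩ S) + #(G.neighborFinset x ∩ A)) +
      ∑ y ∈ (S ∪ A)ᶜ, (#(G.neighborFinset y ∩ A) + G.degree y) := by
  have hA : ∑ x ∈ A, G.degree x =
      ∑ x ∈ A, (#(G.neighborFinset x ∩ S) + #(G.neighborFinset x ∩ A)) +
        ∑ y ∈ (S ∪ A)ᶜ, #(G.neighborFinset y ∩ A) := by
    rw [← sum_card_neighborFinset_inter_comm, ← sum_add_distrib]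
    exact sum_congr rfl fun x _ => degree_eq_card_inter_add hSA x
  rw [← sum_add_sum_compl (S ∪ A), sum_union hSA, hA]
  simp only [sum_add_distrib]
  ring

/-- The edges from `A` to vertices of degree at least three in `B = (S ∪ A)ᶜ` are counted once
more than those vertices need, which pays for the vertices of `A` without a neighbour in `A`. -/
lemma three_mul_card_le_of_shell (S A E : Finset V) (hSA : Disjoint S A) (hS : #S = 2)
    (hδ : ∀ y ∈ (S ∪ A)ᶜ, 2 ≤ G.degree y)
    (hA : ∀ x ∈ A, ∃ s ∈ S, G.Adj x s)
    (hB : ∀ y ∈ (S ∪ A)ᶜ, ∃ x ∈ A, G.Adj y x)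
    (hE : ∀ x ∈ A, x ∉ E → ∃ y ∈ A ∪ {y ∈ (S ∪ A)ᶜ | 3 ≤ G.degree y}, G.Adj x y)
    (hdeg : #A + #E ≤ ∑ s ∈ S, G.degree s) :
    3 * Fintype.card V ≤ ∑ v, G.degree v + 6 := by
  rw [sum_degree_eq_of_disjoint hSA, ← card_add_card_add_card_compl_union hSA, sum_add_distrib]
  set B := (S ∪ A)ᶜ
  set B₃ := {y ∈ B | 3 ≤ G.degree y}
  have hAS : #A ≤ ∑ x ∈ A, #(G.neighborFinset x ∩ S) := by
    simpa using card_nsmul_le_sum A _ 1 fun x hx =>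
      let ⟨_, hs, hxs⟩ := hA x hx; one_le_card_neighborFinset_inter hxs hs
  have hAA : #A ≤ ∑ x ∈ A, (#(G.neighborFinset x ∩ A) + #(G.neighborFinset x ∩ B₃)) + #E := by
    have := Finset.mul_card_le_sum_add_card_filter A
      (fun x => #(G.neighborFinset x ∩ A) + #(G.neighborFinset x ∩ B₃)) (· ∈ E) (k := 1)
      fun x hx => by
        by_cases hxE : x ∈ E
        · simp [hxE]
        obtain ⟨y, hy, hxy⟩ := hE x hx hxE
        rcases mem_union.mp hy with hy | hy <;>
          · have := one_le_card_neighborFinset_inter hxy hy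
            simp only [hxE]
            omega
    have : #{x ∈ A | x ∈ E} ≤ #E := card_le_card fun x hx => (mem_filter.mp hx).2
    omega
  have hBdeg : 3 * #B + ∑ y ∈ B₃, #(G.neighborFinset y ∩ A) ≤
      ∑ y ∈ B, (#(G.neighborFinset y ∩ A) + G.degree y) := by
    rw [sum_filter, mul_comm, ← smul_eq_mul, ← sum_const, ← sum_add_distrib]
    refine sum_le_sum fun y hy => ?_
    obtain ⟨x, hx, hyx⟩ := hB y hy
    have := one_le_card_neighborFinset_inter hyx hx
    have := hδ y hy
    split_ifs <;> omega
  have := sum_card_neighborFinset_inter_comm (G := G) A B₃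
  rw [sum_add_distrib] at hAA
  omega

end Finite

section Leaf

variable [Fintype V] [DecidableEq V] [DecidableRel G.Adj]

/-- Leaves far from the leaf `ℓ` hang on pairwise adjacent neighbours of `w`, so a third one
would close a 4-cycle through `w`. -/
lemma card_filter_degree_eq_one_le_two (hfree : ¬ HasC4 G) (hG : G.ThreeWalkConnected)
    {ℓ w : V} (hℓ : G.neighborFinset ℓ = {w}) :
    #{y ∈ ({w} ∪ G.neighborFinset w)ᶜ | G.degree y = 1} ≤ 2 := by
  set L := {y ∈ ({w} ∪ G.neighborFinset w)ᶜ | G.degree y = 1}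
  have hhub : ∀ y ∈ L, ∃ h, G.neighborFinset y = {h} ∧ G.Adj w h ∧ ¬ G.Adj w y := by
    intro y hy
    simp only [L, mem_filter, mem_compl, mem_union, mem_singleton, mem_neighborFinset,
      not_or] at hy
    obtain ⟨⟨hyw, hwy⟩, hdeg⟩ := hy
    obtain ⟨h, hh⟩ := card_eq_one.mp hdeg
    have hyℓ : y ≠ ℓ := by
      rintro rfl
      exact hwy ((adj_iff_of_neighborFinset_eq hℓ w).mpr (mem_singleton_self w)).symm
    obtain ⟨q, hwq, hqy⟩ := hG.exists_adj_adj_of_leaf hℓ hyℓ hyw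
    rw [G.adj_comm, adj_iff_of_neighborFinset_eq hh, mem_singleton] at hqy
    exact ⟨h, hh, hqy ▸ hwq, hwy⟩
  choose! hub hhub using hhub
  have hadj : ∀ y ∈ L, ∀ y' ∈ L, y ≠ y' → G.Adj (hub y) (hub y') := by
    intro y hy y' hy' hne
    refine hG.adj_of_leaves (hhub y hy).1 (hhub y' hy').1 hne fun h => (hhub y' hy').2.2 ?_
    rw [adj_iff_of_neighborFinset_eq (hhub y hy).1, mem_singleton] at h
    exact h ▸ (hhub y hy).2.1
  by_contra hc
  obtain ⟨y₁, h₁, y₂, h₂, y₃, h₃, h₁₂, h₁₃, h₂₃⟩ := two_lt_card.mp (not_le.mp hc)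
  exact hfree (hasC4_of_adj (hhub y₁ h₁).2.1 (hadj y₁ h₁ y₂ h₂ h₁₂) (hadj y₂ h₂ y₃ h₃ h₂₃)
    (hhub y₃ h₃).2.1.symm (hhub y₂ h₂).2.1.ne (hadj y₁ h₁ y₃ h₃ h₁₃).ne)

lemma three_mul_card_le_of_leaf (hfree : ¬ HasC4 G) (hG : G.ThreeWalkConnected) {ℓ w : V}
    (hℓ : G.neighborFinset ℓ = {w}) : 3 * Fintype.card V ≤ ∑ v, G.degree v + 6 := by
  have hdisj : Disjoint {w} (G.neighborFinset w) :=
    disjoint_singleton_left.mpr (G.notMem_neighborFinset_self w)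
  rw [sum_degree_eq_of_disjoint hdisj, ← card_add_card_add_card_compl_union hdisj, sum_singleton,
    sum_add_distrib, card_singleton, ← card_neighborFinset_eq_degree]
  set A := G.neighborFinset w
  have hℓA : ℓ ∈ A := by
    rw [mem_neighborFinset, G.adj_comm, adj_iff_of_neighborFinset_eq hℓ]
    exact mem_singleton_self w
  have hAS : ∑ x ∈ A, #(G.neighborFinset x ∩ {w}) = #A := by
    rw [card_eq_sum_ones]
    refine sum_congr rfl fun x hx => ?_
    rw [inter_singleton_of_mem ((mem_neighborFinset _ _ _).mpr
      ((mem_neighborFinset _ _ _).mp hx).symm), card_singleton]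
  have hAA : #A ≤ ∑ x ∈ A, #(G.neighborFinset x ∩ A) + 1 := by
    have := Finset.mul_card_le_sum_add_card_filter A (fun x => #(G.neighborFinset x ∩ A)) (· = ℓ)
      (k := 1) fun x hx => by
        by_cases hxℓ : x = ℓ
        · simp [hxℓ]
        obtain ⟨q, hwq, hqx⟩ :=
          hG.exists_adj_adj_of_leaf hℓ hxℓ (G.ne_of_adj ((mem_neighborFinset _ _ _).mp hx)).symm
        simpa [hxℓ] using
          one_le_card_neighborFinset_inter hqx.symm ((mem_neighborFinset _ _ _).mpr hwq)
    have : #{x ∈ A | x = ℓ} ≤ 1 := card_le_one.mpr fun x hx y hy => by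
      rw [(mem_filter.mp hx).2, (mem_filter.mp hy).2]
    omega
  have hB : 3 * #({w} ∪ A)ᶜ ≤ ∑ y ∈ ({w} ∪ A)ᶜ, (#(G.neighborFinset y ∩ A) + G.degree y) + 2 := by
    have := Finset.mul_card_le_sum_add_card_filter ({w} ∪ A)ᶜ
      (fun y => #(G.neighborFinset y ∩ A) + G.degree y) (G.degree · = 1) (k := 3) fun y hy => by
        rw [mem_compl, mem_union, mem_singleton, not_or] at hy
        obtain ⟨q, hwq, hqy⟩ := hG.exists_adj_adj_of_leaf hℓ (fun h : y = ℓ => hy.2 (h ▸ hℓA)) hy.1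
        have h₁ : 1 ≤ #(G.neighborFinset y ∩ A) :=
          one_le_card_neighborFinset_inter hqy.symm ((mem_neighborFinset _ _ _).mpr hwq)
        have h₂ : #(G.neighborFinset y ∩ A) ≤ G.degree y := card_le_card inter_subset_left
        split_ifs <;> omega
    have : #{y ∈ ({w} ∪ A)ᶜ | G.degree y = 1} ≤ 2 := card_filter_degree_eq_one_le_two hfree hG hℓ
    omega
  omega

end Leaf

section PairRoot

variable [Fintype V] [DecidableEq V] [DecidableRel G.Adj]

lemma ThreeWalkConnected.exists_adj_adj_of_neighborFinset_eq_pair (hG : G.ThreeWalkConnected)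
    {v a b x : V} (hv : G.neighborFinset v = {a, b}) (hxv : x ≠ v) (hxa : x ≠ a) (hxb : x ≠ b) :
    ∃ q, (G.Adj a q ∨ G.Adj b q) ∧ G.Adj q x := by
  obtain ⟨p, q, hp, hpq, hqx⟩ :=
    hG (Ne.symm hxv) (by rw [adj_iff_of_neighborFinset_eq hv]; simp [hxa, hxb])
  rw [adj_iff_of_neighborFinset_eq hv, mem_insert, mem_singleton] at hp
  rcases hp with rfl | rfl
  · exact ⟨q, .inl hpq, hqx⟩
  · exact ⟨q, .inr hpq, hqx⟩

lemma ThreeWalkConnected.exists_adj_of_mem_compl_shell (hG : G.ThreeWalkConnected) {v a b y : V}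
    (hv : G.neighborFinset v = {a, b})
    (hy : y ∈ ({a, b} ∪ (G.neighborFinset a ∪ G.neighborFinset b) \ {a, b})ᶜ) :
    ∃ x ∈ (G.neighborFinset a ∪ G.neighborFinset b) \ {a, b}, G.Adj y x := by
  have hva := (adj_iff_of_neighborFinset_eq hv a).mpr (by simp)
  have hvb := (adj_iff_of_neighborFinset_eq hv b).mpr (by simp)
  simp only [mem_compl, mem_union, mem_sdiff, mem_insert, mem_singleton, mem_neighborFinset]
    at hy ⊢
  obtain ⟨q, hq, hqy⟩ := hG.exists_adj_adj_of_neighborFinset_eq_pair (x := y) hv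
    (by grind [G.adj_symm]) (by grind) (by grind)
  exact ⟨q, by grind, hqy.symm⟩

lemma three_mul_card_le_of_not_adj (hG : G.ThreeWalkConnected) (hδ : ∀ y, 2 ≤ G.degree y)
    {v a b : V} (hv : G.neighborFinset v = {a, b}) (hab : a ≠ b) (hn : ¬ G.Adj a b) :
    3 * Fintype.card V ≤ ∑ v, G.degree v + 6 := by
  have hva := (adj_iff_of_neighborFinset_eq hv a).mpr (by simp)
  have hvb := (adj_iff_of_neighborFinset_eq hv b).mpr (by simp)
  set A := (G.neighborFinset a ∪ G.neighborFinset b) \ {a, b}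
  have hmem : ∀ x, x ∈ A ↔ (G.Adj a x ∨ G.Adj b x) ∧ x ≠ a ∧ x ≠ b := fun x => by
    simp [A, mem_neighborFinset, and_comm]
  refine three_mul_card_le_of_shell {a, b} A {v} disjoint_sdiff (card_pair hab) (fun y _ => hδ y)
    (fun x hx => ?_) (fun y hy => hG.exists_adj_of_mem_compl_shell hv hy) (fun x hx hxv => ?_) ?_
  · rcases ((hmem x).mp hx).1 with h | h
    · exact ⟨a, by simp, h.symm⟩
    · exact ⟨b, by simp, h.symm⟩
  · obtain ⟨q, hq, hqx⟩ := hG.exists_adj_adj_of_neighborFinset_eq_pair hv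
      (by simpa using hxv) ((hmem x).mp hx).2.1 ((hmem x).mp hx).2.2
    refine ⟨q, mem_union_left _ ((hmem q).mpr ⟨hq, ?_, ?_⟩), hqx.symm⟩ <;>
      rintro rfl <;> simp_all [G.adj_comm]
  · have hv : 1 ≤ #(G.neighborFinset a ∩ G.neighborFinset b) :=
      one_le_card_neighborFinset_inter hva.symm ((mem_neighborFinset _ _ _).mpr hvb.symm)
    have := card_union_add_card_inter (G.neighborFinset a) (G.neighborFinset b)
    have : #A ≤ #(G.neighborFinset a ∪ G.neighborFinset b) := card_le_card sdiff_subset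
    rw [sum_pair hab, card_singleton, ← card_neighborFinset_eq_degree,
      ← card_neighborFinset_eq_degree]
    omega

/-- The vertices counted here, other than `v`, carry pendant triangles, so any two of them are
adjacent; but they have no neighbours in `A`. -/
lemma card_filter_shell_le_two (hfree : ¬ HasC4 G) (hG : G.ThreeWalkConnected)
    (hδ : ∀ y, 2 ≤ G.degree y)
    (htri : ∀ z x y, G.degree z = 2 → G.Adj z x → G.Adj z y → x ≠ y → G.Adj x y)
    {v a b : V} (hv : G.neighborFinset v = {a, b}) (hab : a ≠ b) {A : Finset V}
    (hA : A = (G.neighborFinset a ∪ G.neighborFinset b) \ {a, b}) :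
    #{x ∈ A | ¬ ∃ y ∈ A ∪ {y ∈ ({a, b} ∪ A)ᶜ | 3 ≤ G.degree y}, G.Adj x y} ≤ 2 := by
  set E := {x ∈ A | ¬ ∃ y ∈ A ∪ {y ∈ ({a, b} ∪ A)ᶜ | 3 ≤ G.degree y}, G.Adj x y}
  have hva := (adj_iff_of_neighborFinset_eq hv a).mpr (by simp)
  have hvb := (adj_iff_of_neighborFinset_eq hv b).mpr (by simp)
  have hpendant : ∀ x ∈ E, x ≠ v →
      ∃ u w, (∀ z, G.Adj u z ↔ z = x ∨ z = w) ∧ (∀ z, G.Adj w z ↔ z = x ∨ z = u) := by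
    intro x hx hxv
    simp only [E, hA, mem_filter, mem_union, mem_sdiff, mem_compl, mem_insert, mem_singleton,
      mem_neighborFinset, not_exists, not_and] at hx
    obtain ⟨u, hxu, hu⟩ : ∃ u, G.Adj x u ∧ u ∉ ({a, b} : Finset V) := by
      by_contra! h
      have hN : G.neighborFinset x = {a, b} := eq_of_subset_of_card_le
        (fun u hu => h u ((mem_neighborFinset _ _ _).mp hu)) (by rw [card_pair hab]; exact hδ x)
      exact hxv (eq_of_adj_of_adj_of_not_hasC4 hfree hab
        ((adj_iff_of_neighborFinset_eq hN a).mpr (by simp)).symm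
        ((adj_iff_of_neighborFinset_eq hN b).mpr (by simp)).symm hva.symm hvb.symm)
    obtain ⟨w, huw, hwu⟩ := exists_pendant_triangle hδ htri hxu hu fun y hxy hy => by
      simp only [mem_insert, mem_singleton] at hy
      have := hx.2 y
      refine ⟨?_, ?_⟩ <;> grind [G.adj_symm]
    exact ⟨u, w, huw, hwu⟩
  have hE : #(E.erase v) ≤ 1 := card_le_one.mpr fun x hx x' hx' => by
    by_contra hne
    obtain ⟨u, w, hu, hw⟩ := hpendant x (mem_of_mem_erase hx) (ne_of_mem_erase hx)
    obtain ⟨u', w', hu', hw'⟩ := hpendant x' (mem_of_mem_erase hx') (ne_of_mem_erase hx')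
    exact (mem_filter.mp (mem_of_mem_erase hx)).2 ⟨x',
      mem_union_left _ (mem_filter.mp (mem_of_mem_erase hx')).1,
      hG.adj_of_pendant_triangles hu hw hu' hw' hne⟩
  have := pred_card_le_card_erase (s := E) (a := v)
  omega

lemma three_mul_card_le_of_triangles (hfree : ¬ HasC4 G) (hG : G.ThreeWalkConnected)
    (hδ : ∀ y, 2 ≤ G.degree y)
    (htri : ∀ z x y, G.degree z = 2 → G.Adj z x → G.Adj z y → x ≠ y → G.Adj x y)
    {v a b : V} (hv : G.neighborFinset v = {a, b}) (hab : a ≠ b) :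
    3 * Fintype.card V ≤ ∑ v, G.degree v + 6 := by
  have hva := (adj_iff_of_neighborFinset_eq hv a).mpr (by simp)
  have hvb := (adj_iff_of_neighborFinset_eq hv b).mpr (by simp)
  have hadj : G.Adj a b :=
    htri v a b (by rw [← card_neighborFinset_eq_degree, hv, card_pair hab]) hva hvb hab
  set A := (G.neighborFinset a ∪ G.neighborFinset b) \ {a, b}
  refine three_mul_card_le_of_shell {a, b} A _ disjoint_sdiff (card_pair hab) (fun y _ => hδ y)
    (fun x hx => ?_) (fun y hy => hG.exists_adj_of_mem_compl_shell hv hy)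
    (fun x hx hxE => by_contra fun h => hxE (mem_filter.mpr ⟨hx, h⟩)) ?_
  · simp only [A, mem_sdiff, mem_union, mem_neighborFinset] at hx
    rcases hx.1 with h | h
    · exact ⟨a, by simp, h.symm⟩
    · exact ⟨b, by simp, h.symm⟩
  · have hsub : {a, b} ⊆ G.neighborFinset a ∪ G.neighborFinset b := by
      intro z hz
      rcases mem_insert.mp hz with rfl | hz
      · exact mem_union_right _ ((mem_neighborFinset _ _ _).mpr hadj.symm)
      · exact mem_union_left _ ((mem_neighborFinset _ _ _).mpr (mem_singleton.mp hz ▸ hadj))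
    have h₁ : #A + 2 = #(G.neighborFinset a ∪ G.neighborFinset b) := by
      rw [← card_pair hab]; exact card_sdiff_add_card_eq_card hsub
    have h₂ := card_union_le (G.neighborFinset a) (G.neighborFinset b)
    have h₃ : #{x ∈ A | ¬ ∃ y ∈ A ∪ {y ∈ ({a, b} ∪ A)ᶜ | 3 ≤ G.degree y}, G.Adj x y} ≤ 2 :=
      card_filter_shell_le_two hfree hG hδ htri hv hab rfl
    rw [sum_pair hab, ← card_neighborFinset_eq_degree, ← card_neighborFinset_eq_degree]
    omega

end PairRoot

theorem three_mul_card_le_sum_degree_add_six [Fintype V] [DecidableEq V] [DecidableRel G.Adj]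
    (hfree : ¬ HasC4 G) (hG : G.ThreeWalkConnected) :
    3 * Fintype.card V ≤ ∑ v, G.degree v + 6 := by
  by_cases hleaf : ∃ ℓ, G.degree ℓ = 1
  · obtain ⟨ℓ, hℓ⟩ := hleaf
    obtain ⟨w, hw⟩ := card_eq_one.mp hℓ
    exact three_mul_card_le_of_leaf hfree hG hw
  by_cases hiso : ∃ z, G.degree z = 0
  · obtain ⟨z, hz⟩ := hiso
    have := hG.card_le_one_of_degree_eq_zero hz
    omega
  push Not at hleaf hiso
  have hδ : ∀ y, 2 ≤ G.degree y := fun y => by have := hleaf y; have := hiso y; omega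
  by_cases hpath : ∃ v a b, G.neighborFinset v = {a, b} ∧ a ≠ b ∧ ¬ G.Adj a b
  · obtain ⟨v, a, b, hv, hab, hn⟩ := hpath
    exact three_mul_card_le_of_not_adj hG hδ hv hab hn
  by_cases hdeg2 : ∃ v, G.degree v = 2
  · obtain ⟨v, hv⟩ := hdeg2
    obtain ⟨a, b, hab, hv⟩ := card_eq_two.mp hv
    refine three_mul_card_le_of_triangles hfree hG hδ (fun z x y hz hx hy hxy => ?_) hv hab
    by_contra hn
    exact hpath ⟨z, x, y, neighborFinset_eq_pair_of_degree_eq_two hz hx hy hxy, hxy, hn⟩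
  push Not at hdeg2
  have := card_nsmul_le_sum univ (G.degree ·) 3 fun y _ => by
    have := hδ y; have := hdeg2 y; omega
  rw [card_univ, smul_eq_mul] at this
  omega

end SimpleGraph

theorem stmt0_general {V : Type*} [Fintype V] (G : SimpleGraph V)
    (hfree : ¬ HasC4 G)
    (hsat : ∀ u v : V, u ≠ v → ¬ G.Adj u v → HasC4 (G ⊔ SimpleGraph.fromEdgeSet {s(u, v)})) :
    (3 * Fintype.card V - 5) / 2 ≤ G.edgeSet.ncard := by
  classical
  have h := three_mul_card_le_sum_degree_add_six hfree (threeWalkConnected_of_saturated hfree hsat)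
  rw [sum_degrees_eq_twice_card_edges] at h
  rw [← coe_edgeFinset, Set.ncard_coe_finset]
  omega

/-- Ollmann: every C4-saturated graph on n ≥ 5 vertices has at least ⌊(3n−5)/2⌋ edges. -/
theorem stmt0 {V : Type*} [Fintype V] (G : SimpleGraph V)
    (hn : 5 ≤ Fintype.card V)
    (hfree : ¬ HasC4 G)
    (hsat : ∀ u v : V, u ≠ v → ¬ G.Adj u v → HasC4 (G ⊔ SimpleGraph.fromEdgeSet {s(u, v)})) :
    (3 * Fintype.card V - 5) / 2 ≤ G.edgeSet.ncard :=
  stmt0_general G hfree hsat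
end

section
/- For all k ≥ 2, the Ramsey number r(C4, K_{1,k}) is at most k + ⌊√(k−1)⌋ + 2; that is, for every 2-coloring of the edges of the complete graph on k + ⌊√(k−1)⌋ + 2 vertices with colors red and blue, there is either a red cycle of length 4 or a blue star K_{1,k}. -/
open SimpleGraph

/-!
Suppose the red graph `R` has no `C₄` and every blue degree is below `k`, and put
`s = ⌊√(k-1)⌋`. Then every red degree is at least `d = s + 2`, and any two vertices have at most
one common red neighbour. Counting red cherries gives `n · d(d-1) ≤ n(n-1)`, i.e.
`(s+2)(s+1) ≤ k + s + 1`, which forces `k = (s+1)²` and makes every estimate tight: `R` is a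
`d`-regular friendship graph. For a prime `p ∣ d - 1` its adjacency matrix `A` satisfies `A² = J`
over `ZMod p`, so `tr (A ^ p) = tr J = n ≡ 1`, while `tr (A ^ p) = (tr A) ^ p = 0`.
-/

open Finset Matrix

namespace SimpleGraph

variable {V : Type*} [Fintype V] {G : SimpleGraph V} [DecidableRel G.Adj] {d : ℕ}

lemma IsRegularOfDegree.adjMatrix_mul_ones {α : Type*} [NonAssocSemiring α]
    (hd : G.IsRegularOfDegree d) (hd1 : (d : α) = 1) :
    G.adjMatrix α * of (fun _ _ => 1) = of fun _ _ => 1 := by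
  ext v w
  simp [hd v, hd1]

variable [DecidableEq V]

variable (G) in
def IsFriendship : Prop :=
  ∀ ⦃v w : V⦄, v ≠ w → #(G.neighborFinset v ∩ G.neighborFinset w) = 1

lemma card_neighborFinset_inter_le_one_of_not_hasC4 (hG : ¬ HasC4 G) {u w : V} (huw : u ≠ w) :
    #(G.neighborFinset u ∩ G.neighborFinset w) ≤ 1 := by
  refine card_le_one.mpr fun a ha b hb => ?_
  simp only [mem_inter, mem_neighborFinset] at ha hb
  by_contra hab
  exact hG ⟨a, u, b, w, ha.1.ne', hab, ha.2.ne', hb.1.ne, huw, hb.2.ne', ha.1.symm, hb.1,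
    hb.2.symm, ha.2⟩

variable (G) in
lemma sum_card_offDiag_neighborFinset :
    ∑ v, #(G.neighborFinset v).offDiag =
      ∑ p ∈ (univ : Finset V).offDiag, #(G.neighborFinset p.1 ∩ G.neighborFinset p.2) := by
  convert sum_card_bipartiteAbove_eq_sum_card_bipartiteBelow (s := univ)
    (t := (univ : Finset V).offDiag) (r := fun v p => G.Adj v p.1 ∧ G.Adj v p.2) using 3
  · ext; simp [bipartiteAbove, and_comm, and_left_comm]
  · ext; simp [bipartiteBelow, adj_comm]

lemma isRegularOfDegree_and_isFriendship_of_card_sub_one_le (hd : 1 ≤ d)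
    (hdeg : ∀ v, d ≤ G.degree v)
    (hcommon : ∀ ⦃u w : V⦄, u ≠ w → #(G.neighborFinset u ∩ G.neighborFinset w) ≤ 1)
    (hcard : Fintype.card V - 1 ≤ d * (d - 1)) :
    G.IsRegularOfDegree d ∧ G.IsFriendship := by
  have hcherries : ∀ v, #(G.neighborFinset v).offDiag = G.degree v * (G.degree v - 1) := by
    intro v
    rw [offDiag_card, card_neighborFinset_eq_degree, Nat.mul_sub_one]
  have hlow : ∀ v ∈ univ, d * (d - 1) ≤ #(G.neighborFinset v).offDiag := fun v _ => by
    rw [hcherries]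
    exact Nat.mul_le_mul (hdeg v) (Nat.sub_le_sub_right (hdeg v) 1)
  have hup : ∀ p ∈ (univ : Finset V).offDiag,
      #(G.neighborFinset p.1 ∩ G.neighborFinset p.2) ≤ 1 :=
    fun p hp => hcommon (mem_offDiag.mp hp).2.2
  have htight : ∑ _v : V, d * (d - 1) = ∑ v, #(G.neighborFinset v).offDiag ∧
      ∑ p ∈ (univ : Finset V).offDiag, #(G.neighborFinset p.1 ∩ G.neighborFinset p.2) =
        ∑ p ∈ (univ : Finset V).offDiag, 1 := by
    have h1 := sum_le_sum hlow
    have h2 := sum_le_sum hup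
    have h3 := Nat.mul_le_mul_left (Fintype.card V) hcard
    rw [sum_card_offDiag_neighborFinset] at h1 ⊢
    simp only [sum_const, card_univ, offDiag_card, smul_eq_mul, mul_one] at h1 h2 h3 ⊢
    rw [Nat.mul_sub_one] at h3
    omega
  refine ⟨fun v => ?_, fun v w hvw => ?_⟩
  · have hv := (sum_eq_sum_iff_of_le hlow).mp htight.1 v (mem_univ v)
    rw [hcherries] at hv
    by_contra hne
    have := Nat.mul_lt_mul'' (lt_of_le_of_ne (hdeg v) (Ne.symm hne))
      (show d - 1 < G.degree v - 1 by have := hdeg v; omega)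
    omega
  · exact (sum_eq_sum_iff_of_le hup).mp htight.2 (v, w) (by simp [hvw])

lemma IsFriendship.card_sub_one_eq [Nonempty V] (hG : G.IsFriendship)
    (hd : G.IsRegularOfDegree d) : Fintype.card V - 1 = d * (d - 1) := by
  have hcount := sum_card_offDiag_neighborFinset G
  rw [sum_congr rfl fun p hp => hG (mem_offDiag.mp hp).2.2] at hcount
  simp only [offDiag_card, card_neighborFinset_eq_degree, hd _, sum_const, card_univ,
    smul_eq_mul, mul_one, ← Nat.mul_sub_one] at hcount
  exact (Nat.eq_of_mul_eq_mul_left Fintype.card_pos hcount).symm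

section adjMatrix

variable {α : Type*} [Semiring α]

lemma IsFriendship.adjMatrix_mul_self (hG : G.IsFriendship) (hd : G.IsRegularOfDegree d)
    (hd1 : (d : α) = 1) : G.adjMatrix α * G.adjMatrix α = of fun _ _ => 1 := by
  ext v w
  rcases eq_or_ne v w with rfl | hvw
  · rw [adjMatrix_mul_self_apply_self, hd v, hd1, of_apply]
  · have hcommon : (G.neighborFinset v).filter (G.Adj · w) =
        G.neighborFinset v ∩ G.neighborFinset w := by
      ext; simp [adj_comm]
    rw [adjMatrix_mul_apply, of_apply]
    simp only [adjMatrix_apply, sum_boole, hcommon, hG hvw, Nat.cast_one]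

lemma IsFriendship.adjMatrix_pow (hG : G.IsFriendship) (hd : G.IsRegularOfDegree d)
    (hd1 : (d : α) = 1) {m : ℕ} (hm : 2 ≤ m) : G.adjMatrix α ^ m = of fun _ _ => 1 := by
  induction m, hm using Nat.le_induction with
  | base => rw [sq, hG.adjMatrix_mul_self hd hd1]
  | succ m _ ih => rw [pow_succ', ih, hd.adjMatrix_mul_ones hd1]

end adjMatrix

theorem IsFriendship.not_isRegularOfDegree [Nonempty V] (hG : G.IsFriendship) (hd : 3 ≤ d) :
    ¬ G.IsRegularOfDegree d := by
  intro hreg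
  set p := (d - 1).minFac
  have hp : p.Prime := Nat.minFac_prime (by omega)
  have : Fact p.Prime := ⟨hp⟩
  have hdvd : ((d - 1 : ℕ) : ZMod p) = 0 := (ZMod.natCast_eq_zero_iff _ _).mpr (d - 1).minFac_dvd
  have hd1 : (d : ZMod p) = 1 := by
    rw [Nat.cast_sub (by omega), Nat.cast_one, sub_eq_zero] at hdvd
    exact hdvd
  have hcard : (Fintype.card V : ZMod p) = 1 := by
    have := hG.card_sub_one_eq hreg
    rw [show Fintype.card V = d * (d - 1) + 1 by have := Fintype.card_pos (α := V); omega]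
    simp [hdvd]
  have htrace := ZMod.trace_pow_card (G.adjMatrix (ZMod p))
  rw [trace_adjMatrix, zero_pow hp.ne_zero, hG.adjMatrix_pow hreg hd1 hp.two_le] at htrace
  simp [Matrix.trace, hcard] at htrace

end SimpleGraph

/-- Parsons: r(C4, K_{1,k}) ≤ k + ⌊√(k−1)⌋ + 2. -/
theorem stmt1 (k : ℕ) (hk : 2 ≤ k) (V : Type*) [Fintype V]
    (hcard : Fintype.card V = k + Nat.sqrt (k - 1) + 2)
    (R : SimpleGraph V) :
    HasC4 R ∨ ∃ v : V, k ≤ ((Rᶜ).neighborSet v).ncard := by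
  classical
  by_contra! h
  obtain ⟨hC4, hblue⟩ := h
  set s := Nat.sqrt (k - 1)
  have hs : 1 ≤ s := Nat.le_sqrt.mpr (by omega)
  have hks : k - 1 < (s + 1) * (s + 1) := Nat.lt_succ_sqrt (k - 1)
  have hdeg : ∀ v, s + 2 ≤ R.degree v := by
    intro v
    have hv := hblue v
    rw [← coe_neighborFinset, Set.ncard_coe_finset, card_neighborFinset_eq_degree,
      degree_compl] at hv
    have := R.degree_lt_card_verts v
    omega
  have hn : Fintype.card V - 1 ≤ (s + 2) * (s + 2 - 1) := by
    have : (s + 2) * (s + 1) = (s + 1) * (s + 1) + (s + 1) := by ring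
    rw [show s + 2 - 1 = s + 1 by omega, hcard]
    omega
  obtain ⟨hreg, hfr⟩ := isRegularOfDegree_and_isFriendship_of_card_sub_one_le (by omega) hdeg
    (fun _ _ => card_neighborFinset_inter_le_one_of_not_hasC4 hC4) hn
  have : Nonempty V := Fintype.card_pos_iff.mp (by omega)
  exact hfr.not_isRegularOfDegree (by omega) hreg
end

section
/- Let k ≥ 2 and let G be a (C4, K_{1,k})-co-critical graph on n ≥ k + ⌊√(k−1)⌋ + 2 vertices, and let τ be a critical coloring of G with red class E_r and blue class E_b. If S ⊆ V(G) is the set of vertices whose degree in the blue subgraph is at most k−2, then S is a clique in G. -/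
/-!
Suppose two vertices `u, v` of blue degree at most `k - 2` were non-adjacent. Adding the edge
`uv` and colouring it blue raises only the blue degrees of `u` and `v`, each to at most `k - 1`,
and creates no red edge; so `G + uv` would still have a critical colouring, contradicting
co-criticality.
-/

open SimpleGraph

namespace SimpleGraph

variable {V : Type*} {u v w : V}

lemma neighborSet_sup_edge_left (H : SimpleGraph V) (huv : u ≠ v) :
    (H ⊔ edge u v).neighborSet u = insert v (H.neighborSet u) := by
  ext x
  simp only [mem_neighborSet, sup_adj, edge_adj, Set.mem_insert_iff]
  grind [SimpleGraph.Adj.ne]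

lemma neighborSet_sup_edge_of_ne (H : SimpleGraph V) (hu : w ≠ u) (hv : w ≠ v) :
    (H ⊔ edge u v).neighborSet w = H.neighborSet w := by
  ext x
  simp [edge_adj, hu, hv]

lemma sup_edge_sdiff_of_not_adj {G R : SimpleGraph V} (h : ¬R.Adj u v) :
    (G ⊔ edge u v) \ R = G \ R ⊔ edge u v := by
  rw [sup_sdiff, ((disjoint_edge R).mpr h).symm.sdiff_eq_left]

end SimpleGraph

lemma CriticalColoring.sup_edge {V : Type*} {k : ℕ} {G R : SimpleGraph V} {u v : V}
    (hτ : CriticalColoring k G R) (huv : u ≠ v) (hadj : ¬G.Adj u v)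
    (hu : ((G \ R).neighborSet u).ncard + 1 < k) (hv : ((G \ R).neighborSet v).ncard + 1 < k) :
    CriticalColoring k (G ⊔ edge u v) R := by
  obtain ⟨hRG, hC4, hblue⟩ := hτ
  refine ⟨hRG.trans le_sup_left, hC4, fun w => ?_⟩
  rw [sup_edge_sdiff_of_not_adj fun h => hadj (hRG h)]
  by_cases hwu : w = u
  · subst hwu
    rw [neighborSet_sup_edge_left _ huv]
    exact (Set.ncard_insert_le _ _).trans_lt hu
  by_cases hwv : w = v
  · subst hwv
    rw [edge_comm, neighborSet_sup_edge_left _ huv.symm]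
    exact (Set.ncard_insert_le _ _).trans_lt hv
  rw [neighborSet_sup_edge_of_ne _ hwu hwv]
  exact hblue w

theorem stmt3_general {V : Type*} (k : ℕ) (hk : 2 ≤ k) (G : SimpleGraph V)
    (hG : CoCritical k G) (R : SimpleGraph V) (hτ : CriticalColoring k G R) :
    {v : V | ((G \ R).neighborSet v).ncard ≤ k - 2}.Pairwise G.Adj := by
  intro u hu v hv huv
  by_contra hadj
  have hu' : ((G \ R).neighborSet u).ncard ≤ k - 2 := hu
  have hv' : ((G \ R).neighborSet v).ncard ≤ k - 2 := hv
  -- `edge u v` unfolds to the `fromEdgeSet {s(u, v)}` of `CoCritical`.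
  exact hG.2.2 u v huv hadj ⟨R, hτ.sup_edge huv hadj (by omega) (by omega)⟩

theorem stmt3 {V : Type*} [Fintype V] (k : ℕ) (hk : 2 ≤ k) (G : SimpleGraph V)
    (hn : k + Nat.sqrt (k - 1) + 2 ≤ Fintype.card V)
    (hG : CoCritical k G) (R : SimpleGraph V) (hτ : CriticalColoring k G R) :
    {v : V | ((G \ R).neighborSet v).ncard ≤ k - 2}.Pairwise G.Adj :=
  stmt3_general k hk G hG R hτ
end

section
/- Let k ≥ 2, let G be a (C4, K_{1,k})-co-critical graph with a critical coloring τ (red/blue), and let uv be an edge of G that lies in at least 2k−2 triangles of G (i.e., |N(u) ∩ N(v)| ≥ 2k−2). Then uv is colored red and |N_r(u) ∩ N_r(v)| ≤ 1, where N_r denotes neighborhood in the red subgraph. -/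
open SimpleGraph

/-
Two distinct vertices of a `C₄`-free graph have at most one common neighbour. If the edge `uv`
were blue, each of `u`, `v` would have at most `k - 2` blue neighbours besides the other one, so
at most `2k - 3` vertices could be joined to both of them in `G`.
-/

namespace SimpleGraph

variable {V : Type*}

theorem ncard_commonNeighbors_le_one_of_not_hasC4 {R : SimpleGraph V} (hR : ¬ HasC4 R)
    {u v : V} (huv : u ≠ v) : (R.commonNeighbors u v).ncard ≤ 1 := by
  have hsub : (R.commonNeighbors u v).Subsingleton := by
    rintro w ⟨huw, hvw⟩ w' ⟨huw', hvw'⟩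
    by_contra hww'
    exact hR ⟨u, w, v, w', huw.ne, huv, huw'.ne, hvw.ne', hww', hvw'.ne,
      huw, hvw.symm, hvw', huw'.symm⟩
  exact (Set.ncard_le_one hsub.finite).2 fun _ ha _ hb => hsub ha hb

theorem commonNeighbors_subset_union (G R : SimpleGraph V) (u v : V) :
    G.commonNeighbors u v ⊆
      ((G \ R).neighborSet u \ {v}) ∪ ((G \ R).neighborSet v \ {u}) ∪ R.commonNeighbors u v := by
  rintro w ⟨huw, hvw⟩
  by_cases hu : R.Adj u w
  · by_cases hv : R.Adj v w
    · exact Or.inr ⟨hu, hv⟩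
    · exact Or.inl (Or.inr ⟨⟨hvw, hv⟩, huw.ne'⟩)
  · exact Or.inl (Or.inl ⟨⟨huw, hu⟩, hvw.ne'⟩)

end SimpleGraph

namespace CriticalColoring

variable {V : Type*} [Finite V] {k : ℕ} {G R : SimpleGraph V}

theorem ncard_neighborSet_sdiff_add_two_le (hR : CriticalColoring k G R) {u v : V}
    (huv : (G \ R).Adj u v) : ((G \ R).neighborSet u \ {v}).ncard + 2 ≤ k := by
  have := Set.ncard_sdiff_singleton_add_one (show v ∈ (G \ R).neighborSet u from huv)
  have := hR.2.2 u
  omega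

theorem ncard_commonNeighbors_add_three_le (hR : CriticalColoring k G R) {u v : V}
    (huv : (G \ R).Adj u v) : (G.commonNeighbors u v).ncard + 3 ≤ 2 * k := by
  have hu := hR.ncard_neighborSet_sdiff_add_two_le huv
  have hv := hR.ncard_neighborSet_sdiff_add_two_le huv.symm
  have hred := ncard_commonNeighbors_le_one_of_not_hasC4 hR.2.1 huv.ne
  calc (G.commonNeighbors u v).ncard + 3
      ≤ (((G \ R).neighborSet u \ {v}) ∪ ((G \ R).neighborSet v \ {u}) ∪
          R.commonNeighbors u v).ncard + 3 := by
        gcongr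
        · exact Set.toFinite _
        · exact commonNeighbors_subset_union G R u v
    _ ≤ ((G \ R).neighborSet u \ {v}).ncard + ((G \ R).neighborSet v \ {u}).ncard +
          (R.commonNeighbors u v).ncard + 3 := by
        gcongr
        exact (Set.ncard_union_le _ _).trans (by gcongr; exact Set.ncard_union_le _ _)
    _ ≤ 2 * k := by omega

end CriticalColoring

theorem stmt5_general {V : Type*} [Fintype V] (k : ℕ) (G : SimpleGraph V)
    (R : SimpleGraph V) (hτ : CriticalColoring k G R)
    (u v : V) (huv : G.Adj u v)
    (htri : 2 * k - 2 ≤ (G.neighborSet u ∩ G.neighborSet v).ncard) :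
    R.Adj u v ∧ (R.neighborSet u ∩ R.neighborSet v).ncard ≤ 1 := by
  refine ⟨?_, ncard_commonNeighbors_le_one_of_not_hasC4 hτ.2.1 huv.ne⟩
  by_contra hblue
  have := hτ.ncard_commonNeighbors_add_three_le (show (G \ R).Adj u v from ⟨huv, hblue⟩)
  rw [commonNeighbors_eq] at this
  omega

theorem stmt5 {V : Type*} [Fintype V] (k : ℕ) (hk : 2 ≤ k) (G : SimpleGraph V)
    (hG : CoCritical k G) (R : SimpleGraph V) (hτ : CriticalColoring k G R)
    (u v : V) (huv : G.Adj u v)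
    (htri : 2 * k - 2 ≤ (G.neighborSet u ∩ G.neighborSet v).ncard) :
    R.Adj u v ∧ (R.neighborSet u ∩ R.neighborSet v).ncard ≤ 1 :=
  stmt5_general k G R hτ u v huv htri
end

section
/- Let k ≥ 2 and let G be a (C4, K_{1,k})-co-critical graph with a critical coloring with red and blue classes. If an edge uv lies in exactly 2k−1 triangles of G, then |N_r(u) ∩ N_r(v)| = 1, |N_b(u) ∩ (N(u) ∩ N(v))| = |N_b(v) ∩ (N(u) ∩ N(v))| = k−1, and N_b(u) ∩ N_b(v) = ∅, where N_r and N_b denote red and blue neighborhoods. -/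
/-! In a critical colouring the common neighbourhood of `u` and `v` is covered by the red common
neighbourhood, of size at most one since there is no red `C₄`, and the blue neighbourhoods of `u`
and `v`, each of size at most `k - 1`. A common neighbourhood of size `2k - 1` forces all three
bounds to be attained and the two blue parts to be disjoint. -/

open SimpleGraph

theorem Set.ncard_add_ncard_inter_le_of_subset_union {α : Type*} {T X A B : Set α}
    (hT : T ⊆ X ∪ (A ∪ B)) (hX : X.Finite := by toFinite_tac)
    (hA : A.Finite := by toFinite_tac) (hB : B.Finite := by toFinite_tac) :
    T.ncard + (A ∩ B).ncard ≤ X.ncard + A.ncard + B.ncard := by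
  have hcover : T.ncard ≤ (X ∪ (A ∪ B)).ncard := Set.ncard_le_ncard hT (hX.union (hA.union hB))
  have hunion := Set.ncard_union_le X (A ∪ B)
  have hAB := Set.ncard_union_add_ncard_inter A B hA hB
  omega

theorem SimpleGraph.commonNeighbors_subsingleton_of_not_hasC4 {V : Type*} {R : SimpleGraph V}
    (hR : ¬HasC4 R) {u v : V} (huv : u ≠ v) : (R.commonNeighbors u v).Subsingleton := by
  rintro w₁ ⟨hw₁u, hw₁v⟩ w₂ ⟨hw₂u, hw₂v⟩
  by_contra hw
  exact hR ⟨u, w₁, v, w₂, hw₁u.ne, huv, hw₂u.ne, hw₁v.ne', hw, hw₂v.ne,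
    hw₁u, hw₁v.symm, hw₂v, hw₂u.symm⟩

section Coloring

variable {V : Type*} (G R : SimpleGraph V) (u v : V)

theorem SimpleGraph.commonNeighbors_subset_red_union_blue :
    G.commonNeighbors u v ⊆ R.commonNeighbors u v ∪
      ((G \ R).neighborSet u ∩ G.commonNeighbors u v ∪
        (G \ R).neighborSet v ∩ G.commonNeighbors u v) := by
  intro w hw
  by_cases hu : R.Adj u w
  · by_cases hv : R.Adj v w
    · exact Or.inl ⟨hu, hv⟩
    · exact Or.inr (Or.inr ⟨⟨hw.2, hv⟩, hw⟩)
  · exact Or.inr (Or.inl ⟨⟨hw.1, hu⟩, hw⟩)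

theorem SimpleGraph.blue_commonNeighbors_eq_inter :
    (G \ R).neighborSet u ∩ (G \ R).neighborSet v =
      ((G \ R).neighborSet u ∩ G.commonNeighbors u v) ∩
        ((G \ R).neighborSet v ∩ G.commonNeighbors u v) := by
  ext w
  simp only [Set.mem_inter_iff, mem_neighborSet, sdiff_adj, mem_commonNeighbors]
  tauto

end Coloring

theorem stmt7_general {V : Type*} [Fintype V] (k : ℕ) (G : SimpleGraph V)
    (R : SimpleGraph V) (hτ : CriticalColoring k G R)
    (u v : V) (huv : G.Adj u v)
    (htri : (G.neighborSet u ∩ G.neighborSet v).ncard = 2 * k - 1) :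
    (R.neighborSet u ∩ R.neighborSet v).ncard = 1 ∧
    ((G \ R).neighborSet u ∩ (G.neighborSet u ∩ G.neighborSet v)).ncard = k - 1 ∧
    ((G \ R).neighborSet v ∩ (G.neighborSet u ∩ G.neighborSet v)).ncard = k - 1 ∧
    (G \ R).neighborSet u ∩ (G \ R).neighborSet v = ∅ := by
  obtain ⟨-, hC4, hblue⟩ := hτ
  have hred : (R.commonNeighbors u v).ncard ≤ 1 :=
    Set.ncard_le_one_iff_subsingleton.2 (commonNeighbors_subsingleton_of_not_hasC4 hC4 huv.ne)
  have hcount := Set.ncard_add_ncard_inter_le_of_subset_union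
    (commonNeighbors_subset_red_union_blue G R u v)
  have hbu : ((G \ R).neighborSet u ∩ G.commonNeighbors u v).ncard < k :=
    (Set.ncard_le_ncard Set.inter_subset_left).trans_lt (hblue u)
  have hbv : ((G \ R).neighborSet v ∩ G.commonNeighbors u v).ncard < k :=
    (Set.ncard_le_ncard Set.inter_subset_left).trans_lt (hblue v)
  rw [blue_commonNeighbors_eq_inter, ← Set.ncard_eq_zero]
  simp only [commonNeighbors] at hred hcount hbu hbv ⊢
  omega

theorem stmt7 {V : Type*} [Fintype V] (k : ℕ) (hk : 2 ≤ k) (G : SimpleGraph V)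
    (hG : CoCritical k G) (R : SimpleGraph V) (hτ : CriticalColoring k G R)
    (u v : V) (huv : G.Adj u v)
    (htri : (G.neighborSet u ∩ G.neighborSet v).ncard = 2 * k - 1) :
    (R.neighborSet u ∩ R.neighborSet v).ncard = 1 ∧
    ((G \ R).neighborSet u ∩ (G.neighborSet u ∩ G.neighborSet v)).ncard = k - 1 ∧
    ((G \ R).neighborSet v ∩ (G.neighborSet u ∩ G.neighborSet v)).ncard = k - 1 ∧
    (G \ R).neighborSet u ∩ (G \ R).neighborSet v = ∅ :=
  stmt7_general k G R hτ u v huv htri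
end

section
/- Let G be a (C4, K_{1,k})-co-critical graph (k ≥ 2), and let τ be a critical coloring of G whose red class E_r has maximum size among all critical colorings of G. Then the red subgraph G_r is C4-saturated in the following sense: G_r is C4-free, and for every edge e in the complement of G, the graph G_r + e contains a C4. -/
open SimpleGraph

/-! Adding a non-edge `uv` of `G` to the red graph as well leaves the blue graph unchanged, so if
`R + uv` had no `C₄` it would be a critical coloring of `G + uv`, which co-criticality forbids. -/

theorem sup_sdiff_sup_right_le {α : Type*} [GeneralizedCoheytingAlgebra α] (a b c : α) :
    (a ⊔ c) \ (b ⊔ c) ≤ a \ b := by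
  rw [sdiff_le_iff]
  exact sup_le (le_sup_sdiff.trans (sup_le_sup_right le_sup_left _))
    (le_sup_right.trans le_sup_left)

theorem CriticalColoring.sup {V : Type*} [Finite V] {k : ℕ} {G R : SimpleGraph V}
    (hR : CriticalColoring k G R) (H : SimpleGraph V) (hH : ¬ HasC4 (R ⊔ H)) :
    CriticalColoring k (G ⊔ H) (R ⊔ H) := by
  obtain ⟨hle, -, hblue⟩ := hR
  refine ⟨sup_le_sup_right hle H, hH, fun v => lt_of_le_of_lt ?_ (hblue v)⟩
  exact Set.ncard_le_ncard (neighborSet_mono (sup_sdiff_sup_right_le G R H) v)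

theorem CoCritical.hasC4_sup_edge {V : Type*} [Finite V] {k : ℕ} {G R : SimpleGraph V}
    (hG : CoCritical k G) (hR : CriticalColoring k G R) {u v : V} (huv : u ≠ v)
    (hnadj : ¬ G.Adj u v) : HasC4 (R ⊔ fromEdgeSet {s(u, v)}) := by
  by_contra hno
  exact hG.2.2 u v huv hnadj ⟨_, hR.sup _ hno⟩

theorem stmt12_general {V : Type*} [Fintype V] (k : ℕ) (G : SimpleGraph V)
    (hG : CoCritical k G) (R : SimpleGraph V) (hτ : CriticalColoring k G R) :
    ¬ HasC4 R ∧ ∀ u v : V, u ≠ v → ¬ G.Adj u v →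
      HasC4 (R ⊔ SimpleGraph.fromEdgeSet {s(u, v)}) :=
  ⟨hτ.2.1, fun _ _ huv hnadj => hG.hasC4_sup_edge hτ huv hnadj⟩

theorem stmt12 {V : Type*} [Fintype V] (k : ℕ) (hk : 2 ≤ k) (G : SimpleGraph V)
    (hG : CoCritical k G) (R : SimpleGraph V) (hτ : CriticalColoring k G R)
    (hmax : ∀ R' : SimpleGraph V, CriticalColoring k G R' →
      R'.edgeSet.ncard ≤ R.edgeSet.ncard) :
    ¬ HasC4 R ∧ ∀ u v : V, u ≠ v → ¬ G.Adj u v →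
      HasC4 (R ⊔ SimpleGraph.fromEdgeSet {s(u, v)}) :=
  stmt12_general k G hG R hτ
end

section
/- For all k ≥ 3 and n ≥ 3k + 4, there exists a (C4, K_{1,k})-co-critical graph G on n vertices with at most (k+2)n/2 + k edges. -/
open SimpleGraph

/-! The seed graph on `Fin n` joins vertex `0` to every vertex and vertex `1` to `2, …, 2k`. It
has a critical colouring while `K_n` has none, so it lies below a maximal critically colourable
graph `G`, and such a maximal graph is co-critical. In a critical colouring of `G`, the vertices
`0` and `1` have `2k - 1` common neighbours, the most two vertices can have when blue degrees are
below `k` and the red graph is `C₄`-free; this equality forces the edge `01` to be red and every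
other vertex to have a red edge to `0` or `1`. A `C₄`-free graph of that shape has at most
`(3n - 2) / 2` edges (its edges avoiding `0` and `1` form a matching), and adding the at most
`(k - 1) n / 2` blue edges gives `2 |E(G)| ≤ (k + 2) n - 2`. -/

open Finset

variable {V : Type*} {k : ℕ} {R : SimpleGraph V}

theorem hasC4_of_adj {x y u w : V} (hxy : x ≠ y) (huw : u ≠ w) (hxu : R.Adj x u)
    (huy : R.Adj u y) (hyw : R.Adj y w) (hwx : R.Adj w x) : HasC4 R :=
  ⟨x, u, y, w, hxu.ne, hxy, hwx.ne', huy.ne, huw, hyw.ne, hxu, huy, hyw, hwx⟩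

theorem not_hasC4_of_forall_adj_mem {S : Set V} (hcover : ∀ u v, R.Adj u v → u ∈ S ∨ v ∈ S)
    (hcommon : ∀ x ∈ S, ∀ y ∈ S, x ≠ y →
      ∀ u w, R.Adj x u → R.Adj y u → R.Adj x w → R.Adj y w → u = w) :
    ¬ HasC4 R := by
  rintro ⟨p, q, r, s, -, hpr, -, -, hqs, -, hpq, hqr, hrs, hsp⟩
  by_cases hp : p ∈ S
  · by_cases hr : r ∈ S
    · exact hqs (hcommon p hp r hr hpr q s hpq hqr.symm hsp.symm hrs)
    · have hq := (hcover q r hqr).resolve_right hr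
      have hs := (hcover r s hrs).resolve_left hr
      exact hpr (hcommon q hq s hs hqs p r hpq.symm hsp hqr hrs.symm)
  · have hq := (hcover p q hpq).resolve_left hp
    have hs := (hcover s p hsp).resolve_right hp
    exact hpr (hcommon q hq s hs hqs p r hpq.symm hsp hqr hrs.symm)

theorem exists_adj_adj_of_not_hasC4 {a b : V} (hR : ¬ HasC4 R) (hab : R.Adj a b)
    (hdom : ∀ v, v ≠ a → v ≠ b → R.Adj a v ∨ R.Adj b v) {v w : V} (hva : v ≠ a) (hvb : v ≠ b)
    (hwa : w ≠ a) (hwb : w ≠ b) (hvw : R.Adj v w) :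
    ∃ h, (h = a ∨ h = b) ∧ R.Adj h v ∧ R.Adj h w := by
  rcases hdom v hva hvb with hav | hbv <;> rcases hdom w hwa hwb with haw | hbw
  · exact ⟨a, .inl rfl, hav, haw⟩
  · by_cases haw : R.Adj a w
    · exact ⟨a, .inl rfl, hav, haw⟩
    by_cases hbv : R.Adj b v
    · exact ⟨b, .inr rfl, hbv, hbw⟩
    exact (hR (hasC4_of_adj hvb hwa hvw hbw.symm hab.symm hav)).elim
  · by_cases hbw : R.Adj b w
    · exact ⟨b, .inr rfl, hbv, hbw⟩
    by_cases hav : R.Adj a v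
    · exact ⟨a, .inl rfl, hav, haw⟩
    exact (hR (hasC4_of_adj hva hwb hvw haw.symm hab hbv)).elim
  · exact ⟨b, .inr rfl, hbv, hbw⟩

section Finite

variable [Fintype V] [DecidableRel R.Adj] {G : SimpleGraph V} [DecidableRel G.Adj]

theorem CriticalColoring.degree_sdiff_lt (hc : CriticalColoring k G R) (v : V) :
    (G \ R).degree v < k := by
  have := hc.2.2 v
  rwa [Set.ncard_eq_toFinset_card', Set.toFinset_card, card_neighborSet_eq_degree] at this

variable [DecidableEq V]

theorem degree_eq_degree_add_degree_sdiff (h : R ≤ G) (v : V) :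
    G.degree v = R.degree v + (G \ R).degree v := by
  have hsub : R.neighborFinset v ⊆ G.neighborFinset v := fun w hw => by
    simpa using h (by simpa using hw)
  simp only [← card_neighborFinset_eq_degree, neighborFinset_sdiff]
  rw [← card_sdiff_add_card_eq_card hsub, add_comm]

theorem card_inter_neighborFinset_le_one_of_not_hasC4 (hR : ¬ HasC4 R) {x y : V} (hxy : x ≠ y) :
    #(R.neighborFinset x ∩ R.neighborFinset y) ≤ 1 := by
  refine card_le_one.mpr fun u hu w hw => ?_
  simp only [mem_inter, mem_neighborFinset] at hu hw
  by_contra huw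
  exact hR (hasC4_of_adj hxy huw hu.1 hu.2.symm hw.2 hw.1.symm)

theorem card_neighborFinset_sdiff_pair_le_one {a b : V} (hR : ¬ HasC4 R) (hab : R.Adj a b)
    (hdom : ∀ v, v ≠ a → v ≠ b → R.Adj a v ∨ R.Adj b v) {v : V} (hva : v ≠ a) (hvb : v ≠ b) :
    #(R.neighborFinset v \ {a, b}) ≤ 1 := by
  refine card_le_one.mpr fun u hu u' hu' => ?_
  simp only [mem_sdiff, mem_neighborFinset, mem_insert, mem_singleton, not_or] at hu hu'
  obtain ⟨h, hh, hhv, hhu⟩ :=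
    exists_adj_adj_of_not_hasC4 hR hab hdom hva hvb hu.2.1 hu.2.2 hu.1
  obtain ⟨h', hh', hh'v, hh'u'⟩ :=
    exists_adj_adj_of_not_hasC4 hR hab hdom hva hvb hu'.2.1 hu'.2.2 hu'.1
  by_contra huu'
  by_cases hhh' : h = h'
  · subst hhh'
    exact hR (hasC4_of_adj huu' hhv.ne' hu.1.symm hu'.1 hh'u'.symm hhu)
  · have hhh'R : R.Adj h h' := by
      rcases hh with rfl | rfl <;> rcases hh' with rfl | rfl
      exacts [absurd rfl hhh', hab, hab.symm, absurd rfl hhh']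
    have huh' : u ≠ h' := by rcases hh' with rfl | rfl; exacts [hu.2.1, hu.2.2]
    exact hR (hasC4_of_adj huh' hhv.ne hhu.symm hhh'R hh'v hu.1)

theorem neighborFinset_inter_pair {a b : V} (hab : R.Adj a b) :
    R.neighborFinset a ∩ {a, b} = {b} := by
  ext w
  simp only [mem_inter, mem_neighborFinset, mem_insert, mem_singleton]
  constructor
  · rintro ⟨hw, rfl | rfl⟩
    exacts [(R.loopless.irrefl _ hw).elim, rfl]
  · rintro rfl
    exact ⟨hab, .inr rfl⟩

theorem sum_degree_add_two_le_of_not_hasC4 {a b : V} (hR : ¬ HasC4 R) (hab : R.Adj a b)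
    (hdom : ∀ v, v ≠ a → v ≠ b → R.Adj a v ∨ R.Adj b v) :
    ∑ v, R.degree v + 2 ≤ 3 * Fintype.card V := by
  set S : Finset V := {a, b}
  have hsplit : ∑ v, R.degree v = R.degree a + R.degree b + ∑ v ∈ Sᶜ, R.degree v := by
    rw [← sum_add_sum_compl S, sum_pair hab.ne]
  have hrest : ∀ v ∈ Sᶜ, R.degree v ≤ #(R.neighborFinset v ∩ S) + 1 := by
    intro v hv
    simp only [S, mem_compl, mem_insert, mem_singleton, not_or] at hv
    rw [← card_neighborFinset_eq_degree, ← card_inter_add_card_sdiff _ S]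
    exact Nat.add_le_add_left (card_neighborFinset_sdiff_pair_le_one hR hab hdom hv.1 hv.2) _
  have hcount : ∑ v ∈ Sᶜ, #(R.neighborFinset v ∩ S) = ∑ x ∈ S, #(R.neighborFinset x \ S) := by
    convert sum_card_bipartiteAbove_eq_sum_card_bipartiteBelow (s := Sᶜ) (t := S) (r := R.Adj)
      using 3 with v - x -
    · ext; simp [bipartiteAbove, and_comm]
    · ext; simp [bipartiteBelow, adj_comm, and_comm]
  have hhub : ∀ {x y}, R.Adj x y → S = {x, y} → #(R.neighborFinset x \ S) + 1 = R.degree x := by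
    intro x y hxy hS
    have := card_inter_add_card_sdiff (R.neighborFinset x) S
    rw [hS, neighborFinset_inter_pair hxy, card_singleton, card_neighborFinset_eq_degree] at this
    rw [hS]
    omega
  have hunion : #(R.neighborFinset a \ S) + #(R.neighborFinset b \ S) ≤ #Sᶜ + 1 := by
    rw [← card_union_add_card_inter]
    gcongr
    · exact union_subset (fun _ hv => mem_compl.mpr (mem_sdiff.mp hv).2)
        (fun _ hv => mem_compl.mpr (mem_sdiff.mp hv).2)
    · exact (card_le_card (by gcongr <;> exact sdiff_subset)).trans
        (card_inter_neighborFinset_le_one_of_not_hasC4 hR hab.ne)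
  have hcardS : #Sᶜ + 2 = Fintype.card V := by
    rw [card_compl, card_pair hab.ne]
    have := card_le_univ S
    rw [card_pair hab.ne] at this
    omega
  have hsum := sum_le_sum hrest
  rw [sum_add_distrib, hcount, sum_pair hab.ne, sum_const, smul_eq_mul, mul_one] at hsum
  have ha := hhub hab rfl
  have hb := hhub hab.symm (pair_comm a b)
  omega

theorem inter_neighborFinset_subset_union_sdiff (x y : V) :
    G.neighborFinset x ∩ G.neighborFinset y ⊆
      ((G \ R).neighborFinset x ∪ (G \ R).neighborFinset y) ∪
        (R.neighborFinset x ∩ R.neighborFinset y) := by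
  intro w
  simp only [mem_inter, mem_union, mem_neighborFinset, sdiff_adj]
  tauto

namespace CriticalColoring

theorem card_inter_neighborFinset_add_one_le (hc : CriticalColoring k G R) {x y : V}
    (hxy : x ≠ y) : #(G.neighborFinset x ∩ G.neighborFinset y) + 1 ≤ 2 * k := by
  have hcover := card_le_card (inter_neighborFinset_subset_union_sdiff (G := G) (R := R) x y)
  have := card_union_le ((G \ R).neighborFinset x ∪ (G \ R).neighborFinset y)
    (R.neighborFinset x ∩ R.neighborFinset y)
  have := card_union_le ((G \ R).neighborFinset x) ((G \ R).neighborFinset y)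
  have := card_inter_neighborFinset_le_one_of_not_hasC4 hc.2.1 hxy
  have hx := hc.degree_sdiff_lt x
  have hy := hc.degree_sdiff_lt y
  rw [← card_neighborFinset_eq_degree] at hx hy
  omega

/-- The equality case of `card_inter_neighborFinset_add_one_le`. -/
theorem sdiff_neighborFinset_subset_and_disjoint (hc : CriticalColoring k G R) {x y : V}
    (hxy : x ≠ y) (hcommon : 2 * k - 1 ≤ #(G.neighborFinset x ∩ G.neighborFinset y)) :
    (G \ R).neighborFinset x ⊆ G.neighborFinset y ∧
      Disjoint ((G \ R).neighborFinset x) ((G \ R).neighborFinset y) := by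
  set c := G.neighborFinset x ∩ G.neighborFinset y
  set B := (G \ R).neighborFinset x ∪ (G \ R).neighborFinset y
  have hc_sub : c ⊆ (B ∩ c) ∪ (R.neighborFinset x ∩ R.neighborFinset y) := fun w hw => by
    rcases mem_union.mp (inter_neighborFinset_subset_union_sdiff (G := G) (R := R) x y hw)
      with h | h
    exacts [mem_union_left _ (mem_inter.mpr ⟨h, hw⟩), mem_union_right _ h]
  have hc_card := (card_le_card hc_sub).trans (card_union_le _ _)
  have hred := card_inter_neighborFinset_le_one_of_not_hasC4 hc.2.1 hxy
  have hB_card : #B + #((G \ R).neighborFinset x ∩ (G \ R).neighborFinset y) =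
      #((G \ R).neighborFinset x) + #((G \ R).neighborFinset y) := card_union_add_card_inter _ _
  have hBc_card := card_le_card (inter_subset_left : B ∩ c ⊆ B)
  have hx := hc.degree_sdiff_lt x
  have hy := hc.degree_sdiff_lt y
  rw [← card_neighborFinset_eq_degree] at hx hy
  have hBc : B ⊆ c := by
    rw [← inter_eq_left]
    exact eq_of_subset_of_card_le inter_subset_left (by omega)
  refine ⟨fun w hw => (mem_inter.mp (hBc (mem_union_left _ hw))).2, ?_⟩
  rw [disjoint_iff_inter_eq_empty, ← card_eq_zero]
  omega

theorem adj_and_adj_or_adj_of_forall_adj (hc : CriticalColoring k G R) {a b : V} (hab : a ≠ b)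
    (ha : ∀ v, v ≠ a → G.Adj a v)
    (hcommon : 2 * k - 1 ≤ #(G.neighborFinset a ∩ G.neighborFinset b)) :
    R.Adj a b ∧ ∀ v, v ≠ a → v ≠ b → R.Adj a v ∨ R.Adj b v := by
  obtain ⟨hsub, hdisj⟩ := hc.sdiff_neighborFinset_subset_and_disjoint hab hcommon
  have hblue : ∀ v, v ≠ a → ¬ R.Adj a v → v ∈ (G \ R).neighborFinset a := fun v hv hr =>
    (mem_neighborFinset _ _ _).mpr ⟨ha v hv, hr⟩
  refine ⟨?_, fun v hva hvb => ?_⟩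
  · by_contra hr
    exact G.loopless.irrefl b ((mem_neighborFinset _ _ _).mp (hsub (hblue b hab.symm hr)))
  · by_contra! ⟨hav, hbv⟩
    have hv := hblue v hva hav
    have hGbv := (mem_neighborFinset _ _ _).mp (hsub hv)
    exact disjoint_left.mp hdisj hv ((mem_neighborFinset _ _ _).mpr ⟨hGbv, hbv⟩)

theorem two_mul_card_edgeFinset_add_two_le (hc : CriticalColoring k G R) {a b : V} (hab : a ≠ b)
    (ha : ∀ v, v ≠ a → G.Adj a v)
    (hcommon : 2 * k - 1 ≤ #(G.neighborFinset a ∩ G.neighborFinset b)) :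
    2 * #G.edgeFinset + 2 ≤ (k + 2) * Fintype.card V := by
  obtain ⟨hRab, hdom⟩ := hc.adj_and_adj_or_adj_of_forall_adj hab ha hcommon
  have hred := sum_degree_add_two_le_of_not_hasC4 hc.2.1 hRab hdom
  have hblue : ∑ v, ((G \ R).degree v + 1) ≤ ∑ _v : V, k :=
    sum_le_sum fun v _ => hc.degree_sdiff_lt v
  rw [sum_add_distrib, sum_const, sum_const, card_univ, smul_eq_mul, smul_eq_mul] at hblue
  rw [← sum_degrees_eq_twice_card_edges,
    sum_congr rfl fun v _ => degree_eq_degree_add_degree_sdiff hc.1 v, sum_add_distrib]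
  nlinarith

end CriticalColoring

theorem not_exists_criticalColoring_top (hV : 2 * k + 2 ≤ Fintype.card V) :
    ¬ ∃ R, CriticalColoring k (⊤ : SimpleGraph V) R := by
  classical
  rintro ⟨R, hc⟩
  obtain ⟨x, y, hxy⟩ := Fintype.exists_pair_of_one_lt_card (α := V) (by omega)
  have hcommon := hc.card_inter_neighborFinset_add_one_le hxy
  rw [neighborFinset_top, neighborFinset_top, ← compl_union, card_compl,
    ← insert_eq, card_pair hxy] at hcommon
  omega

end Finite

theorem exists_coCritical_ge [Finite V] {H : SimpleGraph V} (hH : ∃ R, CriticalColoring k H R)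
    (htop : ¬ ∃ R, CriticalColoring k (⊤ : SimpleGraph V) R) : ∃ G, H ≤ G ∧ CoCritical k G := by
  obtain ⟨G, hHG, hmax⟩ :=
    Finite.exists_le_maximal (p := fun G => ∃ R, CriticalColoring k G R) hH
  refine ⟨G, hHG, fun hG => htop (hG ▸ hmax.prop), hmax.prop, fun u v huv huv' hcol => huv' ?_⟩
  exact hmax.le_of_ge hcol le_sup_left (Or.inr ⟨rfl, huv⟩)

section Seed

variable {n : ℕ}

def seedRed (n k : ℕ) : SimpleGraph (Fin n) :=
  fromRel fun u v =>
    (u.val = 0 ∧ ¬ (k < v.val ∧ v.val < 2 * k)) ∨ (u.val = 1 ∧ k < v.val ∧ v.val ≤ 2 * k)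

def seedBlue (n k : ℕ) : SimpleGraph (Fin n) :=
  fromRel fun u v => (u.val = 0 ∧ k < v.val ∧ v.val < 2 * k) ∨ (u.val = 1 ∧ 2 ≤ v.val ∧ v.val ≤ k)

def seed (n k : ℕ) : SimpleGraph (Fin n) := seedRed n k ⊔ seedBlue n k

theorem not_hasC4_seedRed : ¬ HasC4 (seedRed n k) := by
  refine not_hasC4_of_forall_adj_mem (S := {v | v.val ≤ 1}) (fun u v huv => ?_)
    (fun x hx y hy hxy u w hxu hyu hxw hyw => ?_)
  · simp only [seedRed, fromRel_adj, Set.mem_ofPred_eq] at huv ⊢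
    omega
  · simp only [seedRed, fromRel_adj, Set.mem_ofPred_eq, ne_eq, Fin.ext_iff] at *
    omega

theorem ncard_neighborSet_seedBlue_lt (hk : 3 ≤ k) (v : Fin n) :
    ((seedBlue n k).neighborSet v).ncard < k := by
  obtain ⟨T, hT, hTk⟩ : ∃ T : Finset ℕ, (∀ w, (seedBlue n k).Adj v w → w.val ∈ T) ∧ #T < k := by
    by_cases hv0 : v.val = 0
    · refine ⟨Ioo k (2 * k), fun w hw => ?_, by simp; omega⟩
      simp only [seedBlue, fromRel_adj, ne_eq, Fin.ext_iff, mem_Ioo] at hw ⊢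
      omega
    by_cases hv1 : v.val = 1
    · refine ⟨Icc 2 k, fun w hw => ?_, by simp; omega⟩
      simp only [seedBlue, fromRel_adj, ne_eq, Fin.ext_iff, mem_Icc] at hw ⊢
      omega
    · refine ⟨range 2, fun w hw => ?_, by simp; omega⟩
      simp only [seedBlue, fromRel_adj, ne_eq, Fin.ext_iff, mem_range] at hw ⊢
      omega
  calc ((seedBlue n k).neighborSet v).ncard ≤ (T : Set ℕ).ncard :=
        Set.ncard_le_ncard_of_injOn Fin.val (fun w hw => hT w hw) Fin.val_injective.injOn
    _ = #T := Set.ncard_coe_finset T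
    _ < k := hTk

theorem criticalColoring_seed (hk : 3 ≤ k) : CriticalColoring k (seed n k) (seedRed n k) := by
  refine ⟨le_sup_left, not_hasC4_seedRed, fun v => ?_⟩
  refine lt_of_le_of_lt (Set.ncard_le_ncard fun w hw => ?_) (ncard_neighborSet_seedBlue_lt hk v)
  simp only [seed, mem_neighborSet, sdiff_adj, sup_adj] at hw ⊢
  tauto

theorem seed_adj_of_val_eq_zero {u v : Fin n} (hu : u.val = 0) (huv : u ≠ v) :
    (seed n k).Adj u v := by
  simp only [seed, seedRed, seedBlue, sup_adj, fromRel_adj, ne_eq, Fin.ext_iff] at huv ⊢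
  omega

theorem card_inter_neighborFinset_ge_of_seed_le {G : SimpleGraph (Fin n)} [DecidableRel G.Adj]
    (hG : seed n k ≤ G) (hn : 2 * k < n) {a b : Fin n} (ha : a.val = 0) (hb : b.val = 1) :
    2 * k - 1 ≤ #(G.neighborFinset a ∩ G.neighborFinset b) := by
  rcases Nat.eq_zero_or_pos k with rfl | hk
  · simp
  have hsub :
      Icc (⟨2, by omega⟩ : Fin n) ⟨2 * k, hn⟩ ⊆ G.neighborFinset a ∩ G.neighborFinset b := by
    intro v hv
    simp only [mem_Icc, Fin.le_def] at hv
    simp only [mem_inter, mem_neighborFinset]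
    constructor <;> apply hG <;>
      simp only [seed, seedRed, seedBlue, sup_adj, fromRel_adj, ne_eq, Fin.ext_iff] <;> omega
  simpa using card_le_card hsub

end Seed

theorem stmt17 (k n : ℕ) (hk : 3 ≤ k) (hn : 3 * k + 4 ≤ n) :
    ∃ G : SimpleGraph (Fin n), CoCritical k G ∧
      (G.edgeSet.ncard : ℝ) ≤ ((k : ℝ) + 2) * n / 2 + k := by
  classical
  obtain ⟨G, hseed, hG⟩ := exists_coCritical_ge ⟨_, criticalColoring_seed (n := n) hk⟩
    (not_exists_criticalColoring_top (by simp; omega))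
  obtain ⟨R, hR⟩ := hG.2.1
  have hbound := hR.two_mul_card_edgeFinset_add_two_le (a := ⟨0, by omega⟩) (b := ⟨1, by omega⟩)
    (by simp [Fin.ext_iff]) (fun v hv => hseed (seed_adj_of_val_eq_zero rfl hv.symm))
    (card_inter_neighborFinset_ge_of_seed_le hseed (by omega) rfl rfl)
  refine ⟨G, hG, ?_⟩
  rw [← coe_edgeFinset, Set.ncard_coe_finset]
  rw [Fintype.card_fin] at hbound
  have : (2 * #G.edgeFinset : ℝ) ≤ (k + 2) * n := by exact_mod_cast (by omega)
  linarith
end
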